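/- Let A, B : X → X be linear operators admitting adjoints A*, B* : X → X (i.e. ⟨Au, v⟩ = ⟨u, A*v⟩ and ⟨Bu, v⟩ = ⟨u, B*v⟩ for all u, v ∈ X). Then for every x ∈ X with ⟨x, x⟩ = 1 one has max{Δ_x(A), Δ_x(B)} ≥ √(|⟨(A*A − B*B)x, x⟩ − ⟨(A+B)x, x⟩·⟨(A−B)x, x⟩|), where the outer |·| is the absolute value of K and √ is the real square root. -/

import Mathlib

/-!
Put `u = Ax - ⟨Ax, x⟩x` and `w = Bx - ⟨Bx, x⟩x`. Since `⟨x, x⟩ = 1`, `⟨u, u⟩ = ⟨Ax, Ax⟩ - ⟨Ax, x⟩²`,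
and the adjoint relation turns `⟨A*Ax, x⟩` into `⟨Ax, Ax⟩`; hence the quantity under the root is
exactly `⟨u, u⟩ - ⟨w, w⟩`. The ultrametric inequality in `K` together with Cauchy–Schwarz bounds
its absolute value by `max(‖u‖, ‖w‖)²`.
-/

namespace LinearMap.BilinForm

variable {R M : Type*} [CommRing R] [AddCommGroup M] [Module R M] {B : LinearMap.BilinForm R M}

section OfSymm

variable (f : M → M → R) (hsymm : ∀ u w, f u w = f w u)
  (hadd : ∀ u w z, f u (w + z) = f u w + f u z) (hsmul : ∀ (a : R) u w, f u (a • w) = a * f u w)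

def ofSymm : LinearMap.BilinForm R M :=
  mk₂ R f (fun u w z => by rw [hsymm, hadd, hsymm z, hsymm z]) (fun a u w => by
    rw [hsymm, hsmul, hsymm, smul_eq_mul]) hadd hsmul

theorem isSymm_ofSymm : (ofSymm f hsymm hadd hsmul).IsSymm :=
  ⟨hsymm⟩

end OfSymm

theorem apply_sub_smul_self_sub_smul (hB : B.IsSymm) {x : M} (hx : B x x = 1) (y : M) :
    B (y - B y x • x) (y - B y x • x) = B y y - B y x ^ 2 := by
  simp only [map_sub, map_smul, LinearMap.sub_apply, LinearMap.smul_apply, smul_eq_mul, hx,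
    hB.eq x y]
  ring

theorem apply_comp_apply_of_adjoint (hB : B.IsSymm) {S S' : M →ₗ[R] M}
    (hS : ∀ u w, B (S u) w = B u (S' w)) (x : M) : B ((S' ∘ₗ S) x) x = B (S x) (S x) := by
  rw [hB.eq, LinearMap.comp_apply, hS]

theorem apply_comp_sub_comp_sub_mul_eq (hB : B.IsSymm) {S S' T T' : M →ₗ[R] M}
    (hS : ∀ u w, B (S u) w = B u (S' w)) (hT : ∀ u w, B (T u) w = B u (T' w))
    {x : M} (hx : B x x = 1) :
    B ((S' ∘ₗ S - T' ∘ₗ T) x) x - B ((S + T) x) x * B ((S - T) x) x =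
      B (S x - B (S x) x • x) (S x - B (S x) x • x) -
        B (T x - B (T x) x • x) (T x - B (T x) x • x) := by
  rw [apply_sub_smul_self_sub_smul hB hx, apply_sub_smul_self_sub_smul hB hx,
    ← apply_comp_apply_of_adjoint hB hS, ← apply_comp_apply_of_adjoint hB hT]
  simp only [LinearMap.sub_apply, LinearMap.add_apply, map_add, map_sub]
  ring

end LinearMap.BilinForm

section Ultrametric

variable {K X : Type*} [Field K] {v : AbsoluteValue K ℝ} {N : X → ℝ}

theorem nonneg_of_ultrametric_of_map_smul [AddCommGroup X] [Module K X]
    (hN_ultra : ∀ u w : X, N (u + w) ≤ max (N u) (N w))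
    (hN_smul : ∀ (a : K) (u : X), N (a • u) = v a * N u) (z : X) : 0 ≤ N z := by
  have hN_neg : N (-z) = N z := by
    rw [← neg_one_smul K z, hN_smul, map_neg_eq_map, map_one, one_mul]
  have hN_zero : N 0 = 0 := by simpa using hN_smul 0 0
  simpa [hN_zero, hN_neg] using hN_ultra z (-z)

theorem sqrt_abv_sub_apply_self_le_max (hna : IsNonarchimedean v) (hN_nonneg : ∀ z, 0 ≤ N z)
    {f : X → X → K} (hcs : ∀ u w, v (f u w) ≤ N u * N w) (u w : X) :
    √(v (f u u - f w w)) ≤ max (N u) (N w) := by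
  set M := max (N u) (N w)
  have hM : 0 ≤ M := (hN_nonneg u).trans (le_max_left _ _)
  have hbound : v (f u u - f w w) ≤ M * M := calc
    v (f u u - f w w) ≤ max (v (f u u)) (v (f w w)) := by
      simpa [sub_eq_add_neg] using hna (f u u) (-f w w)
    _ ≤ M * M := max_le
      ((hcs u u).trans (mul_le_mul (le_max_left _ _) (le_max_left _ _) (hN_nonneg u) hM))
      ((hcs w w).trans (mul_le_mul (le_max_right _ _) (le_max_right _ _) (hN_nonneg w) hM))
  exact Real.sqrt_le_iff.mpr ⟨hM, by nlinarith⟩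

end Ultrametric

/-- For adjointable `A B` (adjoints `A*`, `B*`) and `⟨x, x⟩ = 1`:
`max{Δ_x(A), Δ_x(B)} ≥ √(|⟨(A*A − B*B)x, x⟩ − ⟨(A+B)x, x⟩·⟨(A−B)x, x⟩|)`. -/
theorem padic_uncertainty_adjoint_difference_form
    {K X : Type*} [Field K] [AddCommGroup X] [Module K X]
    (v : AbsoluteValue K ℝ) (hna : IsNonarchimedean v)
    (N : X → ℝ)
    (hN_ultra : ∀ u w : X, N (u + w) ≤ max (N u) (N w))
    (hN_smul : ∀ (a : K) (u : X), N (a • u) = v a * N u)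
    (ip : X → X → K)
    (hsymm : ∀ u w : X, ip u w = ip w u)
    (hadd : ∀ u w z : X, ip u (w + z) = ip u w + ip u z)
    (hsmul : ∀ (a : K) (u w : X), ip u (a • w) = a * ip u w)
    (hcs : ∀ u w : X, v (ip u w) ≤ N u * N w)
    (A B Astar Bstar : X →ₗ[K] X)
    (hA : ∀ u w : X, ip (A u) w = ip u (Astar w))
    (hB : ∀ u w : X, ip (B u) w = ip u (Bstar w))
    (x : X) (hx : ip x x = 1) :
    max (N (A x - ip (A x) x • x)) (N (B x - ip (B x) x • x)) ≥
      Real.sqrt (v (ip ((Astar ∘ₗ A - Bstar ∘ₗ B) x) x -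
        ip ((A + B) x) x * ip ((A - B) x) x)) := by
  have hform := LinearMap.BilinForm.apply_comp_sub_comp_sub_mul_eq
    (LinearMap.BilinForm.isSymm_ofSymm ip hsymm hadd hsmul) hA hB hx
  exact (congrArg (fun t => √(v t)) hform).trans_le <|
    sqrt_abv_sub_apply_self_le_max hna (nonneg_of_ultrametric_of_map_smul hN_ultra hN_smul) hcs _ _
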